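/- arXiv:2406.03617 — 5 statements merged into one kernel-verified Lean document; each statement's English description precedes it below -/
import Mathlib

section
/- Let r = σ ⊕ χ₁ ⊕ χ₂, where σ is an irreducible 2-dimensional representation of G over k and χ₁, χ₂ are characters of G. Let ν be a character of G such that ν occurs in ⋀²r and (det σ)·χ₁·χ₂ = ν². Then χ₁·χ₂ = det σ = ν. -/
/-!
As a representation, `⋀²(σ ⊕ χ₁ ⊕ χ₂) ≅ det σ ⊕ σ χ₁ ⊕ σ χ₂ ⊕ χ₁ χ₂`. An irreducible
2-dimensional `σ` has no invariant line, so a `ν`-eigenvector of `⋀²r` has zero components in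
`σ χ₁` and `σ χ₂`; hence `ν = det σ` or `ν = χ₁ χ₂`, and `(det σ) χ₁ χ₂ = ν²` forces the other
equality. The decomposition is realised by explicit coordinates on `⋀²(V × k × k)`, which are
injective because they are surjective onto a space of the same dimension `6 = 1 + 2 + 2 + 1`.
-/

open Module

section ExtSq
variable {k : Type} [Field k]
variable {V W : Type} [AddCommGroup V] [Module k V] [AddCommGroup W] [Module k W]

lemma map_mem_exteriorPower (f : V →ₗ[k] W) (n : ℕ) {x : ExteriorAlgebra k V}
    (hx : x ∈ ⋀[k]^n V) : ExteriorAlgebra.map f x ∈ ⋀[k]^n W := by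
  rw [← ExteriorAlgebra.ιMulti_span_fixedDegree] at hx ⊢
  induction hx using Submodule.span_induction with
  | mem y hy =>
      obtain ⟨m, rfl⟩ := hy
      rw [ExteriorAlgebra.map_apply_ιMulti]
      exact Submodule.subset_span ⟨f ∘ m, rfl⟩
  | zero => simp
  | add y z _ _ h1 h2 => rw [map_add]; exact Submodule.add_mem _ h1 h2
  | smul c y _ h => rw [map_smul]; exact Submodule.smul_mem _ c h

/-- The exterior square of a linear map, as a map between second exterior powers. -/
noncomputable def extSq (f : V →ₗ[k] W) : (⋀[k]^2 V) →ₗ[k] (⋀[k]^2 W) :=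
  LinearMap.restrict (ExteriorAlgebra.map f).toLinearMap
    (fun _ hx => map_mem_exteriorPower f 2 hx)

end ExtSq

open exteriorPower

theorem extSq_eq_map {k V W : Type} [Field k] [AddCommGroup V] [Module k V] [AddCommGroup W]
    [Module k W] (f : V →ₗ[k] W) : extSq f = exteriorPower.map 2 f := by
  ext m
  simp only [LinearMap.compAlternatingMap_apply, map_apply_ιMulti]
  exact ExteriorAlgebra.map_apply_ιMulti f m

section Contraction
variable {R M N : Type*} [CommRing R] [AddCommGroup M] [Module R M] [AddCommGroup N] [Module R N]

def AlternatingMap.contraction (φ : Dual R M) (ψ : M →ₗ[R] N) : M [⋀^Fin 2]→ₗ[R] N where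
  toFun m := φ (m 0) • ψ (m 1) - φ (m 1) • ψ (m 0)
  map_update_add' m i x y := by fin_cases i <;> simp <;> module
  map_update_smul' m i c x := by fin_cases i <;> simp <;> module
  map_eq_zero_of_eq' m i j h hij := by
    fin_cases i <;> fin_cases j <;> simp_all

@[simp] theorem AlternatingMap.contraction_apply (φ : Dual R M) (ψ : M →ₗ[R] N) (m : Fin 2 → M) :
    contraction φ ψ m = φ (m 0) • ψ (m 1) - φ (m 1) • ψ (m 0) := rfl

end Contraction

section Coordinates
variable {k V : Type*} [Field k] [AddCommGroup V] [Module k V]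

open AlternatingMap

/-- Coordinates for `⋀²(V ⊕ k e₁ ⊕ k e₂) ≅ ⋀²V ⊕ (V ∧ e₁) ⊕ (V ∧ e₂) ⊕ k (e₁ ∧ e₂)`,
with `⋀²V` identified with `k` through `b.det`. -/
noncomputable def wedgeCoords (b : Basis (Fin 2) k V) :
    ⋀[k]^2 (V × (k × k)) →ₗ[k] k × V × V × k :=
  let fst := LinearMap.fst k V (k × k)
  let p₁ := LinearMap.fst k k k ∘ₗ LinearMap.snd k V (k × k)
  let p₂ := LinearMap.snd k k k ∘ₗ LinearMap.snd k V (k × k)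
  (alternatingMapLinearEquiv (b.det.compLinearMap fst)).prod <|
    (alternatingMapLinearEquiv (contraction p₁ fst)).prod <|
    (alternatingMapLinearEquiv (contraction p₂ fst)).prod
      (alternatingMapLinearEquiv (contraction p₁ p₂))

theorem wedgeCoords_ιMulti (b : Basis (Fin 2) k V) (m : Fin 2 → V × (k × k)) :
    wedgeCoords b (ιMulti k 2 m) =
      (b.det fun i ↦ (m i).1,
        (m 0).2.1 • (m 1).1 - (m 1).2.1 • (m 0).1,
        (m 0).2.2 • (m 1).1 - (m 1).2.2 • (m 0).1,
        (m 0).2.1 * (m 1).2.2 - (m 1).2.1 * (m 0).2.2) := by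
  simp [wedgeCoords]

theorem wedgeCoords_map (b : Basis (Fin 2) k V) (f : V →ₗ[k] V) (c₁ c₂ : k) :
    wedgeCoords b ∘ₗ map 2 (f.prodMap ((c₁ • LinearMap.id).prodMap (c₂ • LinearMap.id))) =
      (LinearMap.det f • LinearMap.id).prodMap ((c₁ • f).prodMap ((c₂ • f).prodMap
        ((c₁ * c₂) • LinearMap.id))) ∘ₗ wedgeCoords b := by
  ext m : 2
  simp only [LinearMap.compAlternatingMap_apply, LinearMap.comp_apply, map_apply_ιMulti,
    wedgeCoords_ιMulti, Function.comp_apply, LinearMap.prodMap_apply, LinearMap.smul_apply,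
    LinearMap.id_coe, id_eq, smul_eq_mul, map_sub, map_smul, Prod.mk.injEq]
  exact ⟨b.det_comp f _, by module, by module, by ring⟩

theorem wedgeCoords_surjective (b : Basis (Fin 2) k V) : Function.Surjective (wedgeCoords b) := by
  rintro ⟨d, u, w, s⟩
  let e₁ : V × (k × k) := (0, (1, 0))
  let e₂ : V × (k × k) := (0, (0, 1))
  refine ⟨d • ιMulti k 2 (fun i ↦ (b i, 0)) + ιMulti k 2 ![e₁, (u, 0)] + ιMulti k 2 ![e₂, (w, 0)]
    + s • ιMulti k 2 ![e₁, e₂], ?_⟩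
  have hdet₀ : ∀ x y : V × (k × k), x.1 = 0 → b.det (fun i ↦ (![x, y] i).1) = 0 :=
    fun x y hx ↦ b.det.map_coord_zero 0 hx
  simp [wedgeCoords_ιMulti, e₁, e₂, hdet₀, Basis.det_self]

theorem wedgeCoords_injective (b : Basis (Fin 2) k V) : Function.Injective (wedgeCoords b) := by
  have := Module.Finite.of_basis b
  have hV : finrank k V = 2 := by simpa using finrank_eq_card_basis b
  refine (LinearMap.injective_iff_surjective_of_finrank_eq_finrank ?_).mpr
    (wedgeCoords_surjective b)
  simp [exteriorPower.finrank_eq, hV, Nat.choose]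

end Coordinates

theorem Representation.eq_zero_of_forall_apply_eq_smul {k G V : Type*} [Field k] [Monoid G]
    [AddCommGroup V] [Module k V] (σ : Representation k G V)
    (hirr : ∀ p : Submodule k V, (∀ g : G, ∀ v ∈ p, σ g v ∈ p) → p = ⊥ ∨ p = ⊤)
    (hV : finrank k V ≠ 1) {u : V} (hu : ∀ g, ∃ c : k, σ g u = c • u) : u = 0 := by
  by_contra hu₀
  have hinv : ∀ g, ∀ v ∈ k ∙ u, σ g v ∈ k ∙ u := by
    intro g v hv
    obtain ⟨a, rfl⟩ := Submodule.mem_span_singleton.mp hv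
    obtain ⟨c, hc⟩ := hu g
    rw [map_smul, hc, smul_smul]
    exact Submodule.smul_mem _ _ (Submodule.mem_span_singleton_self u)
  rcases hirr _ hinv with h | h
  · exact hu₀ (Submodule.span_singleton_eq_bot.mp h)
  · exact hV (by rw [← finrank_top, ← h, finrank_span_singleton hu₀])

theorem Representation.exteriorSquare_eigenvalue_eq_det_or_mul {k G V : Type*} [Field k]
    [Monoid G] [AddCommGroup V] [Module k V] (σ : Representation k G V) (hV : finrank k V = 2)
    (hirr : ∀ p : Submodule k V, (∀ g : G, ∀ v ∈ p, σ g v ∈ p) → p = ⊥ ∨ p = ⊤)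
    (χ₁ χ₂ ν : G →* kˣ) {x : ⋀[k]^2 (V × (k × k))} (hx : x ≠ 0)
    (hxν : ∀ g, map 2 ((σ g).prodMap (((χ₁ g : k) • LinearMap.id).prodMap
      ((χ₂ g : k) • LinearMap.id))) x = (ν g : k) • x) :
    (∀ g, LinearMap.det (σ g) = ν g) ∨ (∀ g, (χ₁ g : k) * χ₂ g = ν g) := by
  have := Module.finite_of_finrank_eq_succ hV
  let b := finBasisOfFinrankEq k V hV
  rcases hy : wedgeCoords b x with ⟨d, u, w, s⟩
  have heigen : ∀ g, (LinearMap.det (σ g) * d, (χ₁ g : k) • σ g u, (χ₂ g : k) • σ g w,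
      (χ₁ g : k) * χ₂ g * s) = (ν g : k) • (d, u, w, s) := by
    intro g
    have h := congrArg (wedgeCoords b) (hxν g)
    rw [← LinearMap.comp_apply, wedgeCoords_map, map_smul, LinearMap.comp_apply, hy] at h
    simpa using h
  have hline : ∀ (χ : G →* kˣ) (v : V), (∀ g, (χ g : k) • σ g v = (ν g : k) • v) → v = 0 :=
    fun χ v hv ↦ σ.eq_zero_of_forall_apply_eq_smul hirr (by omega) fun g ↦
      ⟨(χ g : k)⁻¹ * ν g, by rw [mul_smul, ← hv g, inv_smul_smul₀ (χ g).ne_zero]⟩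
  have hu : u = 0 := hline χ₁ u fun g ↦ congrArg (·.2.1) (heigen g)
  have hw : w = 0 := hline χ₂ w fun g ↦ congrArg (·.2.2.1) (heigen g)
  have hds : d ≠ 0 ∨ s ≠ 0 := by
    by_contra! h
    exact hx (wedgeCoords_injective b (by rw [hy, h.1, h.2, hu, hw, map_zero]; rfl))
  rcases hds with hd | hs
  · exact .inl fun g ↦ mul_right_cancel₀ hd (congrArg Prod.fst (heigen g))
  · exact .inr fun g ↦ mul_right_cancel₀ hs (congrArg (·.2.2.2) (heigen g))

theorem eq_and_eq_of_mul_eq_sq {k : Type*} [Field k] {d c n : k} (hn : n ≠ 0)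
    (h : d * c = n ^ 2) (hdc : d = n ∨ c = n) : c = d ∧ d = n := by
  rcases hdc with rfl | rfl
  · exact ⟨mul_left_cancel₀ hn (by rw [h, sq]), rfl⟩
  · have hdc : d = c := mul_right_cancel₀ hn (by rw [h, sq])
    exact ⟨hdc.symm, hdc⟩

theorem stmt_1_general {k G V : Type} [Field k] [Group G]
    [AddCommGroup V] [Module k V]
    (σ : Representation k G V) (h2 : finrank k V = 2)
    -- σ is irreducible
    (hirr : (⊥ : Submodule k V) ≠ ⊤ ∧
      ∀ p : Submodule k V, (∀ g : G, ∀ v ∈ p, σ g v ∈ p) → p = ⊥ ∨ p = ⊤)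
    (χ₁ χ₂ ν : G →* kˣ)
    -- ν occurs in ⋀²r, where r = σ ⊕ χ₁ ⊕ χ₂ acts on V × k × k
    (hocc : ∃ L : Submodule k (⋀[k]^2 (V × (k × k))), finrank k L = 1 ∧
        ∀ g : G, ∀ x ∈ L,
          extSq (LinearMap.prodMap (σ g)
            (LinearMap.prodMap ((χ₁ g : k) • (LinearMap.id : k →ₗ[k] k))
              ((χ₂ g : k) • (LinearMap.id : k →ₗ[k] k)))) x = (ν g : k) • x)
    -- (det σ)·χ₁·χ₂ = ν²
    (hdet : ∀ g : G, LinearMap.det (σ g) * (χ₁ g : k) * (χ₂ g : k) = ((ν g : k)) ^ 2) :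
    (∀ g : G, (χ₁ g : k) * (χ₂ g : k) = LinearMap.det (σ g)) ∧
    (∀ g : G, LinearMap.det (σ g) = (ν g : k)) := by
  obtain ⟨L, hL, hLν⟩ := hocc
  obtain ⟨x, hxL, hx⟩ := Submodule.exists_mem_ne_zero_of_ne_bot (p := L) (by rintro rfl; simp at hL)
  have hν := σ.exteriorSquare_eigenvalue_eq_det_or_mul h2 hirr.2 χ₁ χ₂ ν hx fun g ↦ by
    rw [← extSq_eq_map, hLν g x hxL]
  have key g := eq_and_eq_of_mul_eq_sq (ν g).ne_zero (by rw [← mul_assoc, hdet g])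
    (hν.imp (· g) (· g))
  exact ⟨fun g ↦ (key g).1, fun g ↦ (key g).2⟩

theorem stmt_1 {k G V : Type} [Field k] [IsAlgClosed k] [CharZero k] [Group G]
    [AddCommGroup V] [Module k V] [FiniteDimensional k V]
    (σ : Representation k G V) (h2 : finrank k V = 2)
    -- σ is irreducible
    (hirr : (⊥ : Submodule k V) ≠ ⊤ ∧
      ∀ p : Submodule k V, (∀ g : G, ∀ v ∈ p, σ g v ∈ p) → p = ⊥ ∨ p = ⊤)
    (χ₁ χ₂ ν : G →* kˣ)
    -- ν occurs in ⋀²r, where r = σ ⊕ χ₁ ⊕ χ₂ acts on V × k × k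
    (hocc : ∃ L : Submodule k (⋀[k]^2 (V × (k × k))), finrank k L = 1 ∧
        ∀ g : G, ∀ x ∈ L,
          extSq (LinearMap.prodMap (σ g)
            (LinearMap.prodMap ((χ₁ g : k) • (LinearMap.id : k →ₗ[k] k))
              ((χ₂ g : k) • (LinearMap.id : k →ₗ[k] k)))) x = (ν g : k) • x)
    -- (det σ)·χ₁·χ₂ = ν²
    (hdet : ∀ g : G, LinearMap.det (σ g) * (χ₁ g : k) * (χ₂ g : k) = ((ν g : k)) ^ 2) :
    (∀ g : G, (χ₁ g : k) * (χ₂ g : k) = LinearMap.det (σ g)) ∧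
    (∀ g : G, LinearMap.det (σ g) = (ν g : k)) :=
  stmt_1_general σ h2 hirr χ₁ χ₂ ν hocc hdet
end

section
/- Let σ₁ be an irreducible 2-dimensional representation of G over k and let σ₂ be an irreducible representation of G over k. Then there exists a character χ of G with σ₂ ≅ σ₁ ⊗ χ if and only if the tensor product σ₁ ⊗ σ₂ has a 1-dimensional subrepresentation. -/
open Module TensorProduct

/-! For a `2`-dimensional `V` the determinant pairing `(u, v) ↦ det [u, v]` identifies `V` with
`V^∨ ⊗ det`, since `det [g u, g v] = det g · det [u, v]`. Hence `V₁ ⊗ V₂ ≅ Hom(V₁, V₂) ⊗ det σ₁`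
as representations, and a line in `V₁ ⊗ V₂` stable under `G` is the same as a nonzero
`f : V₁ → V₂` with `σ₂ g ∘ f = χ g • f ∘ σ₁ g` for scalars `χ g`. These scalars form a character,
and by Schur's lemma (kernel and image of `f` are subrepresentations) `f` is an isomorphism
`σ₁ ⊗ χ ≅ σ₂`. -/

namespace Module.Basis

variable {k V : Type*} [Field k] [AddCommGroup V] [Module k V] (b : Basis (Fin 2) k V)

theorem det_fin_two_apply (u v : V) :
    b.det ![u, v] = b.repr u 0 * b.repr v 1 - b.repr v 0 * b.repr u 1 := by
  simp [det_apply, Matrix.det_fin_two, toMatrix_apply]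

noncomputable def detForm : V →ₗ[k] V →ₗ[k] k :=
  LinearMap.mk₂ k (fun u v => b.det ![u, v])
    (fun _ _ _ => by simp only [det_fin_two_apply, map_add, Finsupp.add_apply]; ring)
    (fun _ _ _ => by simp only [det_fin_two_apply, map_smul, Finsupp.smul_apply, smul_eq_mul]; ring)
    (fun _ _ _ => by simp only [det_fin_two_apply, map_add, Finsupp.add_apply]; ring)
    (fun _ _ _ => by simp only [det_fin_two_apply, map_smul, Finsupp.smul_apply, smul_eq_mul]; ring)

theorem detForm_apply (u v : V) : b.detForm u v = b.det ![u, v] := rfl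

theorem detForm_map (f : V →ₗ[k] V) (u v : V) :
    b.detForm (f u) (f v) = LinearMap.det f * b.detForm u v := by
  rw [detForm_apply, detForm_apply, ← det_comp]
  congr 1
  ext i; fin_cases i <;> rfl

theorem detForm_flip_injective : Function.Injective b.detForm.flip := by
  refine (injective_iff_map_eq_zero _).2 fun v hv => b.ext_elem fun i => ?_
  have h1 : b.repr v 1 = 0 := by
    simpa [detForm_apply, det_fin_two_apply] using LinearMap.congr_fun hv (b 0)
  have h0 : b.repr v 0 = 0 := by
    simpa [detForm_apply, det_fin_two_apply] using LinearMap.congr_fun hv (b 1)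
  fin_cases i <;> simp [h0, h1]

variable [FiniteDimensional k V]

noncomputable def detFormEquiv : V ≃ₗ[k] Dual k V :=
  b.detForm.flip.linearEquivOfInjective b.detForm_flip_injective Subspace.dual_finrank_eq.symm

theorem detFormEquiv_apply_apply (u v : V) : b.detFormEquiv v u = b.detForm u v := rfl

noncomputable def tensorEquivHom (W : Type*) [AddCommGroup W] [Module k W] :
    V ⊗[k] W ≃ₗ[k] (V →ₗ[k] W) :=
  (TensorProduct.congr b.detFormEquiv (LinearEquiv.refl k W)).trans (dualTensorHomEquiv k V W)

end Module.Basis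

namespace Representation

variable {k G V W : Type*} [Field k] [Group G] [AddCommGroup V] [Module k V]
  [AddCommGroup W] [Module k W] [FiniteDimensional k V]
  (b : Basis (Fin 2) k V) (ρ : Representation k G V) (σ : Representation k G W)

theorem detFormEquiv_apply (g : G) (v : V) :
    b.detFormEquiv (ρ g v) = LinearMap.det (ρ g) • ρ.dual g (b.detFormEquiv v) := by
  ext u
  simp only [LinearMap.smul_apply, dual_apply, Dual.transpose_apply, LinearMap.comp_apply,
    Basis.detFormEquiv_apply_apply, smul_eq_mul, ← b.detForm_map, self_inv_apply]

theorem tensorEquivHom_tprod (g : G) (x : V ⊗[k] W) :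
    b.tensorEquivHom W (tprod ρ σ g x) =
      LinearMap.det (ρ g) • linHom ρ σ g (b.tensorEquivHom W x) := by
  induction x using TensorProduct.induction_on with
  | zero => simp
  | tmul v w =>
    ext u
    simp [Basis.tensorEquivHom, detFormEquiv_apply b ρ, smul_smul, Dual.transpose_apply]
  | add x y hx hy => simp only [map_add, hx, hy, smul_add]

end Representation

section CommonEigenvector

variable {ι k W W' : Type*} [Field k] [AddCommGroup W] [Module k W] [AddCommGroup W'] [Module k W']

def IsCommonEigenvector (T : ι → End k W) (x : W) : Prop :=
  x ≠ 0 ∧ ∀ i, ∃ c : k, T i x = c • x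

theorem exists_invariant_line_iff (T : ι → End k W) :
    (∃ L : Submodule k W, finrank k L = 1 ∧ ∀ i, ∀ x ∈ L, T i x ∈ L) ↔
      ∃ x, IsCommonEigenvector T x := by
  constructor
  · rintro ⟨L, hL, hT⟩
    obtain ⟨x, hx0, hspan⟩ := finrank_eq_one_iff'.mp hL
    refine ⟨x, by simpa using hx0, fun i => ?_⟩
    obtain ⟨c, hc⟩ := hspan ⟨T i x, hT i x x.2⟩
    exact ⟨c, congrArg Subtype.val hc.symm⟩
  · rintro ⟨x, hx0, hx⟩
    refine ⟨k ∙ x, finrank_span_singleton hx0, fun i y hy => ?_⟩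
    obtain ⟨a, rfl⟩ := Submodule.mem_span_singleton.mp hy
    obtain ⟨c, hc⟩ := hx i
    rw [map_smul, hc, smul_smul]
    exact Submodule.smul_mem _ _ (Submodule.mem_span_singleton_self x)

theorem isCommonEigenvector_iff_of_equiv {T : ι → End k W} {T' : ι → End k W'}
    (Φ : W ≃ₗ[k] W') {d : ι → k} (hd : ∀ i, d i ≠ 0)
    (hΦ : ∀ i x, Φ (T i x) = d i • T' i (Φ x)) (x : W) :
    IsCommonEigenvector T x ↔ IsCommonEigenvector T' (Φ x) := by
  refine and_congr Φ.map_ne_zero_iff.symm (forall_congr' fun i => ⟨?_, ?_⟩)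
  · rintro ⟨c, hc⟩
    refine ⟨(d i)⁻¹ * c, ?_⟩
    rw [mul_smul, ← map_smul, ← hc, hΦ, inv_smul_smul₀ (hd i)]
  · rintro ⟨c, hc⟩
    exact ⟨d i * c, Φ.injective (by rw [hΦ, hc, map_smul, smul_smul])⟩

theorem Representation.exists_monoidHom_of_isCommonEigenvector {G : Type*} [Monoid G]
    (ρ : Representation k G W) {x : W} (hx : IsCommonEigenvector ρ x) :
    ∃ χ : G →* k, ∀ g, ρ g x = χ g • x := by
  choose c hc using hx.2
  have hinj := smul_left_injective k hx.1
  refine ⟨{ toFun := c, map_one' := hinj ?_, map_mul' := fun g h => hinj ?_ }, hc⟩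
  · simp only [← hc, map_one, Module.End.one_apply, one_smul]
  · change c (g * h) • x = (c g * c h) • x
    rw [← hc, map_mul, Module.End.mul_apply, hc h, map_smul, hc g, smul_smul, mul_comm]

end CommonEigenvector

theorem LinearMap.bijective_of_apply_eq_smul_apply {ι k V₁ V₂ : Type*} [Field k]
    [AddCommGroup V₁] [Module k V₁] [AddCommGroup V₂] [Module k V₂]
    {T₁ : ι → End k V₁} {T₂ : ι → End k V₂}
    (irr₁ : ∀ p : Submodule k V₁, (∀ i, ∀ v ∈ p, T₁ i v ∈ p) → p = ⊥ ∨ p = ⊤)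
    (irr₂ : ∀ p : Submodule k V₂, (∀ i, ∀ v ∈ p, T₂ i v ∈ p) → p = ⊥ ∨ p = ⊤)
    {f : V₁ →ₗ[k] V₂} (hf : f ≠ 0) {c : ι → k} (hc : ∀ i, c i ≠ 0)
    (h : ∀ i v, T₂ i (f v) = c i • f (T₁ i v)) :
    Function.Bijective f := by
  have hker : ∀ i, ∀ v ∈ ker f, T₁ i v ∈ ker f := fun i v hv => by
    rw [mem_ker] at hv ⊢
    simpa [hv, hc i] using (h i v).symm
  have hrange : ∀ i, ∀ w ∈ range f, T₂ i w ∈ range f := by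
    rintro i _ ⟨v, rfl⟩
    exact ⟨c i • T₁ i v, by rw [map_smul, h]⟩
  refine ⟨?_, ?_⟩
  · exact ker_eq_bot.mp ((irr₁ _ hker).resolve_right fun h => hf (ker_eq_top.mp h))
  · exact range_eq_top.mp ((irr₂ _ hrange).resolve_left fun h => hf (range_eq_bot.mp h))

theorem Representation.exists_twist_equiv_iff {k G V₁ V₂ : Type*} [Field k] [Group G]
    [AddCommGroup V₁] [Module k V₁] [Nontrivial V₁] [AddCommGroup V₂] [Module k V₂]
    {σ₁ : Representation k G V₁} {σ₂ : Representation k G V₂}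
    (irr₁ : ∀ p : Submodule k V₁, (∀ g, ∀ v ∈ p, σ₁ g v ∈ p) → p = ⊥ ∨ p = ⊤)
    (irr₂ : ∀ p : Submodule k V₂, (∀ g, ∀ v ∈ p, σ₂ g v ∈ p) → p = ⊥ ∨ p = ⊤) :
    (∃ χ : G →* kˣ, ∃ e : V₁ ≃ₗ[k] V₂, ∀ g v, e ((χ g : k) • σ₁ g v) = σ₂ g (e v)) ↔
      ∃ f, IsCommonEigenvector (linHom σ₁ σ₂) f := by
  constructor
  · rintro ⟨χ, e, he⟩
    obtain ⟨v, hv⟩ := exists_ne (0 : V₁)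
    refine ⟨e, fun h => hv (e.map_eq_zero_iff.mp (LinearMap.congr_fun h v)), fun g => ⟨χ g, ?_⟩⟩
    ext u
    simp [← he]
  · rintro ⟨f, hf⟩
    obtain ⟨χ, hχ⟩ := (linHom σ₁ σ₂).exists_monoidHom_of_isCommonEigenvector hf
    have hfσ : ∀ g v, σ₂ g (f v) = χ g • f (σ₁ g v) := fun g v => by
      simpa using LinearMap.congr_fun (hχ g) (σ₁ g v)
    have hbij := LinearMap.bijective_of_apply_eq_smul_apply irr₁ irr₂ hf.1
      (fun g => (χ.toHomUnits g).ne_zero) hfσ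
    exact ⟨χ.toHomUnits, .ofBijective f hbij, fun g v => by simp [hfσ]⟩

theorem stmt_3_general {k G V₁ V₂ : Type} [Field k] [Group G]
    [AddCommGroup V₁] [Module k V₁]
    [AddCommGroup V₂] [Module k V₂]
    (σ₁ : Representation k G V₁) (σ₂ : Representation k G V₂)
    (h1 : finrank k V₁ = 2)
    -- σ₁ and σ₂ are irreducible
    (hirr1 : (⊥ : Submodule k V₁) ≠ ⊤ ∧
      ∀ p : Submodule k V₁, (∀ g : G, ∀ v ∈ p, σ₁ g v ∈ p) → p = ⊥ ∨ p = ⊤)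
    (hirr2 : (⊥ : Submodule k V₂) ≠ ⊤ ∧
      ∀ p : Submodule k V₂, (∀ g : G, ∀ v ∈ p, σ₂ g v ∈ p) → p = ⊥ ∨ p = ⊤) :
    (∃ χ : G →* kˣ, ∃ e : V₁ ≃ₗ[k] V₂,
      ∀ (g : G) (v : V₁), e ((χ g : k) • σ₁ g v) = σ₂ g (e v)) ↔
    (∃ L : Submodule k (V₁ ⊗[k] V₂), finrank k L = 1 ∧
      ∀ g : G, ∀ x ∈ L, TensorProduct.map (σ₁ g) (σ₂ g) x ∈ L) := by
  have : FiniteDimensional k V₁ := Module.finite_of_finrank_eq_succ h1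
  have : Nontrivial V₁ := Module.nontrivial_of_finrank_eq_succ h1
  let Φ := (finBasisOfFinrankEq k V₁ h1).tensorEquivHom V₂
  have hdet : ∀ g, LinearMap.det (σ₁ g) ≠ 0 := fun g =>
    (((Group.isUnit g).map σ₁).map LinearMap.det).ne_zero
  rw [Representation.exists_twist_equiv_iff hirr1.2 hirr2.2]
  calc (∃ f, IsCommonEigenvector (Representation.linHom σ₁ σ₂) f)
      ↔ ∃ x, IsCommonEigenvector (Representation.linHom σ₁ σ₂) (Φ x) := Φ.surjective.exists
    _ ↔ ∃ x, IsCommonEigenvector (Representation.tprod σ₁ σ₂) x := exists_congr fun x =>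
      (isCommonEigenvector_iff_of_equiv Φ hdet (Representation.tensorEquivHom_tprod _ σ₁ σ₂) x).symm
    _ ↔ _ := (exists_invariant_line_iff _).symm

theorem stmt_3 {k G V₁ V₂ : Type} [Field k] [IsAlgClosed k] [CharZero k] [Group G]
    [AddCommGroup V₁] [Module k V₁] [FiniteDimensional k V₁]
    [AddCommGroup V₂] [Module k V₂] [FiniteDimensional k V₂]
    (σ₁ : Representation k G V₁) (σ₂ : Representation k G V₂)
    (h1 : finrank k V₁ = 2)
    -- σ₁ and σ₂ are irreducible
    (hirr1 : (⊥ : Submodule k V₁) ≠ ⊤ ∧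
      ∀ p : Submodule k V₁, (∀ g : G, ∀ v ∈ p, σ₁ g v ∈ p) → p = ⊥ ∨ p = ⊤)
    (hirr2 : (⊥ : Submodule k V₂) ≠ ⊤ ∧
      ∀ p : Submodule k V₂, (∀ g : G, ∀ v ∈ p, σ₂ g v ∈ p) → p = ⊥ ∨ p = ⊤) :
    (∃ χ : G →* kˣ, ∃ e : V₁ ≃ₗ[k] V₂,
      ∀ (g : G) (v : V₁), e ((χ g : k) • σ₁ g v) = σ₂ g (e v)) ↔
    (∃ L : Submodule k (V₁ ⊗[k] V₂), finrank k L = 1 ∧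
      ∀ g : G, ∀ x ∈ L, TensorProduct.map (σ₁ g) (σ₂ g) x ∈ L) :=
  stmt_3_general σ₁ σ₂ h1 hirr1 hirr2
end

section
/- Let σ be an irreducible n-dimensional representation of G over k and let η be a character of G with η ≠ 1 and σ ⊗ η ≅ σ. Then ηⁿ = 1, and the restriction of σ to the subgroup ker η = {g ∈ G : η(g) = 1} is reducible, i.e., it has a nonzero proper (ker η)-invariant subspace. -/
/-!
Statement 7: Let `σ` be an irreducible `n`-dimensional representation of `G` over `k` and let
`η` be a character of `G` with `η ≠ 1` and `σ ⊗ η ≅ σ`.  Then `ηⁿ = 1`, and the restriction of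
`σ` to the subgroup `ker η = {g ∈ G : η(g) = 1}` is reducible, i.e., it has a nonzero proper
`(ker η)`-invariant subspace.
-/

open Module

theorem stmt_7 {k G V : Type} [Field k] [IsAlgClosed k] [CharZero k] [Group G]
    [AddCommGroup V] [Module k V] [FiniteDimensional k V]
    (σ : Representation k G V) (n : ℕ) (hn : finrank k V = n)
    -- σ is irreducible
    (hirr : (⊥ : Submodule k V) ≠ ⊤ ∧
      ∀ p : Submodule k V, (∀ g : G, ∀ v ∈ p, σ g v ∈ p) → p = ⊥ ∨ p = ⊤)
    (η : G →* kˣ) (hη : η ≠ 1)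
    -- σ ⊗ η ≅ σ
    (hiso : ∃ e : V ≃ₗ[k] V, ∀ (g : G) (v : V), e ((η g : k) • σ g v) = σ g (e v)) :
    (∀ g : G, (η g) ^ n = 1) ∧
    ∃ p : Submodule k V, p ≠ ⊥ ∧ p ≠ ⊤ ∧
      ∀ g : G, η g = 1 → ∀ v ∈ p, σ g v ∈ p := by
  obtain ⟨e, he⟩ := hiso
  have hnontriv : Nontrivial V := by
    by_contra h
    rw [not_nontrivial_iff_subsingleton] at h
    exact hirr.1 (Subsingleton.elim _ _)
  have hσinv : ∀ g : G, ∀ w : V, σ g (σ g⁻¹ w) = w := by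
    intro g w
    rw [← Module.End.mul_apply, ← map_mul, mul_inv_cancel, map_one, Module.End.one_apply]
  have hdet_e : LinearMap.det e.toLinearMap ≠ 0 := by
    simpa using (LinearEquiv.isUnit_det' e).ne_zero
  have hdet_σ : ∀ g : G, LinearMap.det (σ g) ≠ 0 := by
    intro g
    have h1 : LinearMap.det (σ g) * LinearMap.det (σ g⁻¹) = 1 := by
      rw [← map_mul LinearMap.det, ← map_mul σ, mul_inv_cancel, map_one, map_one]
    exact left_ne_zero_of_mul_eq_one h1
  constructor
  · intro g
    have hcomp : e.toLinearMap ∘ₗ ((η g : k) • (σ g : V →ₗ[k] V)) = σ g ∘ₗ e.toLinearMap := by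
      ext v
      simp only [LinearMap.coe_comp, Function.comp_apply, LinearMap.smul_apply,
        LinearEquiv.coe_coe]
      exact he g v
    have hdet := congrArg LinearMap.det hcomp
    rw [LinearMap.det_comp, LinearMap.det_comp, LinearMap.det_smul, hn] at hdet
    have hk : ((η g : k)) ^ n = 1 := by
      have h2 : ((η g : k)) ^ n * (LinearMap.det (σ g) * LinearMap.det e.toLinearMap)
          = 1 * (LinearMap.det (σ g) * LinearMap.det e.toLinearMap) := by
        linear_combination hdet
      have := mul_right_cancel₀ (mul_ne_zero (hdet_σ g) hdet_e) h2
      simpa using this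
    exact Units.ext (by push_cast; exact hk)
  · obtain ⟨μ, hμ⟩ := Module.End.exists_eigenvalue (e.toLinearMap : Module.End k V)
    refine ⟨Module.End.eigenspace (e.toLinearMap : Module.End k V) μ, hμ, ?_, ?_⟩
    · intro htop
      have hall : ∀ v : V, e v = μ • v := by
        intro v
        have : v ∈ Module.End.eigenspace (e.toLinearMap : Module.End k V) μ := by
          rw [htop]; trivial
        exact Module.End.mem_eigenspace_iff.mp this
      have hμ0 : μ ≠ 0 := by
        obtain ⟨v, hv⟩ := exists_ne (0 : V)
        intro h0
        apply hv
        have := hall v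
        rw [h0, zero_smul] at this
        exact e.injective (by simpa using this)
      obtain ⟨g, hg⟩ : ∃ g : G, η g ≠ 1 := by
        by_contra h
        push_neg at h
        exact hη (MonoidHom.ext fun g => h g)
      obtain ⟨w, hw⟩ := exists_ne (0 : V)
      apply hw
      have key := he g (σ g⁻¹ w)
      rw [hσinv g w, hall, hall, map_smul, hσinv g w, smul_smul] at key
      have : (μ * (η g : k) - μ) • w = 0 := by
        rw [sub_smul, key, sub_self]
      have hne : μ * (η g : k) - μ ≠ 0 := by
        intro h
        apply hg
        have : (η g : k) = 1 := by
          have h2 : μ * ((η g : k) - 1) = 0 := by linear_combination h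
          rcases mul_eq_zero.mp h2 with h3 | h3
          · exact absurd h3 hμ0
          · exact sub_eq_zero.mp h3
        exact Units.ext (this.trans Units.val_one.symm)
      simpa [hne] using (smul_eq_zero.mp this)
    · intro g hg v hv
      rw [Module.End.mem_eigenspace_iff] at hv ⊢
      have := he g v
      rw [hg] at this
      simp only [Units.val_one, one_smul] at this
      calc e.toLinearMap (σ g v) = σ g (e v) := this
        _ = σ g (μ • v) := by rw [← hv]; rfl
        _ = μ • σ g v := map_smul _ _ _
end

section
/- Let σ be an irreducible 2-dimensional representation of G over k with σ ≅ σ^∨ and det σ ≠ 1. Then (det σ)² = 1, σ ⊗ (det σ) ≅ σ, and the restriction of σ to the subgroup ker(det σ) is reducible, i.e., it has a nonzero proper invariant subspace. -/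
/-!
Statement 8: Let `σ` be an irreducible 2-dimensional representation of `G` over `k` with
`σ ≅ σ^∨` and `det σ ≠ 1`.  Then `(det σ)² = 1`, `σ ⊗ (det σ) ≅ σ`, and the restriction of
`σ` to the subgroup `ker (det σ)` is reducible, i.e., it has a nonzero proper invariant
subspace.
-/

open Module

theorem stmt_8 {k G V : Type} [Field k] [IsAlgClosed k] [CharZero k] [Group G]
    [AddCommGroup V] [Module k V] [FiniteDimensional k V]
    (σ : Representation k G V) (h2 : finrank k V = 2)
    -- σ is irreducible
    (hirr : (⊥ : Submodule k V) ≠ ⊤ ∧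
      ∀ p : Submodule k V, (∀ g : G, ∀ v ∈ p, σ g v ∈ p) → p = ⊥ ∨ p = ⊤)
    -- σ ≅ σ^∨
    (hsd : ∃ e : V ≃ₗ[k] Module.Dual k V,
      ∀ (g : G) (v : V), e (σ g v) = LinearMap.dualMap (σ g⁻¹) (e v))
    -- det σ ≠ 1
    (hdet : ∃ g : G, LinearMap.det (σ g) ≠ 1) :
    (∀ g : G, (LinearMap.det (σ g)) ^ 2 = 1) ∧
    (∃ e : V ≃ₗ[k] V, ∀ (g : G) (v : V),
      e (LinearMap.det (σ g) • σ g v) = σ g (e v)) ∧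
    ∃ p : Submodule k V, p ≠ ⊥ ∧ p ≠ ⊤ ∧
      ∀ g : G, LinearMap.det (σ g) = 1 → ∀ v ∈ p, σ g v ∈ p := by
  obtain ⟨e, he⟩ := hsd
  have hVnt : Nontrivial V :=
    Module.nontrivial_of_finrank_pos (R := k) (by rw [h2]; norm_num)
  -- basic facts about σ
  have hσinvl : ∀ (g : G) (v : V), σ g⁻¹ (σ g v) = v := by
    intro g v
    have : σ g⁻¹ (σ g v) = (σ g⁻¹ * σ g) v := rfl
    rw [this, ← map_mul, inv_mul_cancel, map_one, Module.End.one_apply]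
  have hσinvr : ∀ (g : G) (v : V), σ g (σ g⁻¹ v) = v := by
    intro g v
    have : σ g (σ g⁻¹ v) = (σ g * σ g⁻¹) v := rfl
    rw [this, ← map_mul, mul_inv_cancel, map_one, Module.End.one_apply]
  have hσinj : ∀ g : G, Function.Injective (σ g) := by
    intro g a b hab
    have := congrArg (σ g⁻¹) hab
    rwa [hσinvl, hσinvl] at this
  have hdet0 : ∀ g : G, LinearMap.det (σ g) ≠ 0 := by
    intro g
    have h1 : LinearMap.det (σ g) * LinearMap.det (σ g⁻¹) = 1 := by
      rw [← LinearMap.det_comp]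
      have : σ g ∘ₗ σ g⁻¹ = LinearMap.id := by
        ext v; simpa using hσinvr g v
      rw [this, LinearMap.det_id]
    exact left_ne_zero_of_mul_eq_one h1
  -- a basis and the "determinant" bilinear form
  let b : Basis (Fin 2) k V := Module.finBasisOfFinrankEq k V h2
  let B : V →ₗ[k] V →ₗ[k] k := LinearMap.mk₂ k
    (fun v w => b.repr v 0 * b.repr w 1 - b.repr v 1 * b.repr w 0)
    (by intro m m' n; simp [map_add]; ring)
    (by intro c m n; simp [smul_eq_mul]; ring)
    (by intro m n n'; simp [map_add]; ring)
    (by intro c m n; simp [smul_eq_mul]; ring)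
  have hBapp : ∀ v w : V, B v w = b.repr v 0 * b.repr w 1 - b.repr v 1 * b.repr w 0 := by
    intro v w; rfl
  have hB : ∀ (g : G) (v w : V), B (σ g v) (σ g w) = LinearMap.det (σ g) * B v w := by
    intro g v w
    have hd : LinearMap.det (σ g) = (LinearMap.toMatrix b b (σ g)).det :=
      (LinearMap.det_toMatrix b (σ g)).symm
    have hr : ∀ (u : V) (i : Fin 2), b.repr (σ g u) i =
        (LinearMap.toMatrix b b (σ g)) i 0 * b.repr u 0
          + (LinearMap.toMatrix b b (σ g)) i 1 * b.repr u 1 := by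
      intro u i
      rw [← LinearMap.toMatrix_mulVec_repr b b (σ g) u]
      simp [Matrix.mulVec, dotProduct, Fin.sum_univ_two]
    rw [hBapp, hBapp, hr, hr, hr, hr, hd, Matrix.det_fin_two]
    ring
  -- the endomorphism F = e⁻¹ ∘ B
  let F : V →ₗ[k] V := e.symm.toLinearMap ∘ₗ B
  have hFapp : ∀ v : V, F v = e.symm (B v) := fun v => rfl
  -- the key intertwining relation
  have hF : ∀ (g : G) (v : V), F (σ g v) = LinearMap.det (σ g) • σ g (F v) := by
    intro g v
    have h1 : B (σ g v) = LinearMap.det (σ g) • (σ g⁻¹).dualMap (B v) := by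
      ext w
      have : B (σ g v) w = B (σ g v) (σ g (σ g⁻¹ w)) := by rw [hσinvr]
      rw [this, hB]
      simp [LinearMap.dualMap_apply']
    have h2' : e.symm ((σ g⁻¹).dualMap (B v)) = σ g (e.symm (B v)) := by
      have := he g (e.symm (B v))
      rw [e.apply_symm_apply] at this
      rw [← this, e.symm_apply_apply]
    rw [hFapp, h1, map_smul, h2', hFapp]
  -- F is injective
  have hFinj : Function.Injective F := by
    intro v w hvw
    have hB' : B v = B w := e.symm.injective hvw
    have h0 : ∀ i : Fin 2, b.repr v i = b.repr w i := by
      intro i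
      have e1 : B v (b 1) = B w (b 1) := by rw [hB']
      have e0 : B v (b 0) = B w (b 0) := by rw [hB']
      rw [hBapp, hBapp] at e1 e0
      simp [Basis.repr_self, Finsupp.single_eq_same, Finsupp.single_apply] at e1 e0
      fin_cases i
      · exact e1
      · exact e0
    have : b.repr v = b.repr w := by
      ext i; exact h0 i
    exact b.repr.injective this
  have hFbij : Function.Bijective F :=
    ⟨hFinj, LinearMap.injective_iff_surjective.mp hFinj⟩
  have hFdet0 : LinearMap.det F ≠ 0 :=
    IsUnit.ne_zero (LinearEquiv.ofBijective F hFbij).isUnit_det'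
  -- Part 1: (det σ g)² = 1
  have part1 : ∀ g : G, (LinearMap.det (σ g)) ^ 2 = 1 := by
    intro g
    have hcomp : F ∘ₗ σ g = LinearMap.det (σ g) • (σ g ∘ₗ F) := by
      ext v; simpa using hF g v
    have := congrArg LinearMap.det hcomp
    rw [LinearMap.det_comp, LinearMap.det_smul, LinearMap.det_comp, h2] at this
    have hc : LinearMap.det F * LinearMap.det (σ g) =
        LinearMap.det (σ g) ^ 2 * (LinearMap.det (σ g) * LinearMap.det F) := this
    have hne : LinearMap.det (σ g) * LinearMap.det F ≠ 0 := mul_ne_zero (hdet0 g) hFdet0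
    have h3 : LinearMap.det (σ g) ^ 2 * (LinearMap.det (σ g) * LinearMap.det F)
        = 1 * (LinearMap.det (σ g) * LinearMap.det F) := by rw [← hc]; ring
    exact mul_right_cancel₀ hne h3
  refine ⟨part1, ⟨LinearEquiv.ofBijective F hFbij, ?_⟩, ?_⟩
  · intro g v
    show F (LinearMap.det (σ g) • σ g v) = σ g (F v)
    rw [map_smul, hF, smul_smul, ← sq, part1, one_smul]
  -- Part 3
  · have hcomm : ∀ (g : G) (v : V), F (F (σ g v)) = σ g (F (F v)) := by
      intro g v
      rw [hF, map_smul, hF, smul_smul, ← sq, part1, one_smul]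
    obtain ⟨c, hc⟩ := Module.End.exists_eigenvalue (F ∘ₗ F : Module.End k V)
    have htop : Module.End.eigenspace (F ∘ₗ F : Module.End k V) c = ⊤ := by
      have hinvp : ∀ g : G, ∀ v ∈ Module.End.eigenspace (F ∘ₗ F : Module.End k V) c,
          σ g v ∈ Module.End.eigenspace (F ∘ₗ F : Module.End k V) c := by
        intro g v hv
        rw [Module.End.mem_eigenspace_iff] at hv ⊢
        simp only [LinearMap.comp_apply] at hv
        show F (F (σ g v)) = c • σ g v
        rw [hcomm, hv, map_smul]
      rcases hirr.2 _ hinvp with hbot | htop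
      · exact absurd hbot (Module.End.hasEigenvalue_iff.mp hc)
      · exact htop
    have hG2 : ∀ v : V, F (F v) = c • v := by
      intro v
      have hm : v ∈ Module.End.eigenspace (F ∘ₗ F : Module.End k V) c := by
        rw [htop]; trivial
      rwa [Module.End.mem_eigenspace_iff] at hm
    obtain ⟨v₀, hv₀⟩ := exists_ne (0 : V)
    have hc0 : c ≠ 0 := by
      intro h
      have h1 : F (F v₀) = F (F 0) := by
        rw [hG2, h, zero_smul, map_zero, map_zero]
      exact hv₀ (hFinj (hFinj h1))
    obtain ⟨μ, hμ⟩ := IsAlgClosed.exists_pow_nat_eq (c⁻¹ : k) (two_pos)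
    set φ : V →ₗ[k] V := μ • F with hφdef
    have hφapp : ∀ v : V, φ v = μ • F v := fun v => rfl
    have hφ2 : ∀ v : V, φ (φ v) = v := by
      intro v
      rw [hφapp, hφapp, map_smul, hG2, smul_smul, smul_smul]
      have h1 : μ * μ * c = 1 := by
        rw [← pow_two, hμ, inv_mul_cancel₀ hc0]
      rw [mul_assoc, ← mul_assoc, h1, one_smul]
    have hφσ : ∀ (g : G) (v : V), φ (σ g v) = LinearMap.det (σ g) • σ g (φ v) := by
      intro g v
      rw [hφapp, hF, hφapp, map_smul, smul_smul, smul_smul, mul_comm]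
    have key : ∀ s : k, (∀ v : V, φ v = s • v) → False := by
      intro s hs
      obtain ⟨g₀, hg₀⟩ := hdet
      have hσv : σ g₀ v₀ ≠ 0 := by
        intro h
        exact hv₀ (hσinj g₀ (by rw [h, map_zero]))
      have hs0 : s ≠ 0 := by
        intro h
        have h2' := hφ2 v₀
        rw [hs, hs, h] at h2'
        simp only [zero_smul, smul_zero] at h2'
        exact hv₀ h2'.symm
      have h1 : s • σ g₀ v₀ = LinearMap.det (σ g₀) • s • σ g₀ v₀ := by
        have ha := hφσ g₀ v₀
        rw [hs (σ g₀ v₀), hs v₀, map_smul] at ha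
        exact ha
      have h2' : (s - LinearMap.det (σ g₀) * s) • σ g₀ v₀ = 0 := by
        rw [sub_smul, mul_smul, ← h1, sub_self]
      rcases smul_eq_zero.mp h2' with h | h
      · have : s * (1 - LinearMap.det (σ g₀)) = 0 := by ring_nf; ring_nf at h; linear_combination h
        rcases mul_eq_zero.mp this with h' | h'
        · exact hs0 h'
        · exact hg₀ (by linear_combination -h')
      · exact hσv h
    set ψ : V →ₗ[k] V := φ - LinearMap.id with hψdef
    refine ⟨LinearMap.ker ψ, ?_, ?_, ?_⟩
    · intro hbot
      have hinj2 : Function.Injective ⇑ψ := LinearMap.ker_eq_bot.mp hbot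
      refine key (-1) fun v => ?_
      have h0 : ψ (φ v + v) = ψ 0 := by
        simp only [hψdef, LinearMap.sub_apply, LinearMap.add_apply, LinearMap.id_apply,
          map_add, map_zero, hφ2]
        abel
      have h1 : φ v + v = 0 := by simpa using hinj2 h0
      rw [neg_one_smul]
      exact eq_neg_of_add_eq_zero_left h1
    · intro htop'
      refine key 1 fun v => ?_
      have hm : v ∈ LinearMap.ker ψ := by rw [htop']; trivial
      rw [LinearMap.mem_ker, hψdef, LinearMap.sub_apply, LinearMap.id_apply, sub_eq_zero] at hm
      rw [hm, one_smul]
    · intro g hg v hv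
      rw [LinearMap.mem_ker, hψdef, LinearMap.sub_apply, LinearMap.id_apply, sub_eq_zero] at hv ⊢
      rw [hφσ, hv, hg, one_smul]
end

section
/- Let k be an algebraically closed field of characteristic 0, let G be a group, and let ρ be a 5-dimensional representation of G over k on a vector space V such that det(ρ(g)) = 1 for all g ∈ G and there is a nondegenerate symmetric bilinear form B on V with B(ρ(g)v, ρ(g)w) = B(v, w) for all g ∈ G and v, w ∈ V. Suppose V has a 2-dimensional irreducible subrepresentation ρ′ with ρ′ ≅ (ρ′)^∨. Then for every g ∈ G with (det ρ′)(g) = −1, the element −1 is an eigenvalue of ρ(g) and (X + 1)² divides the characteristic polynomial of ρ(g). -/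
/-!
For an invertible endomorphism `T` of an `n`-dimensional space, `det T • χ_{T⁻¹} = (-1)ⁿ • rev χ_T`.
If `T` is conjugate to the dual of `T⁻¹` (for `ρ′` by the self-duality, for `ρ` by the invariant
form `B`), then `χ_T = χ_{T⁻¹}`, so `χ_T` is a scalar multiple of its reverse. Splitting off the
factor `(X + 1)ᵐ`, with `m` the multiplicity of `-1`, and evaluating the cofactor at `-1` then gives
`det T = (-1)ᵐ`. For `ρ′(g)` this makes `m` odd, so `-1` is an eigenvalue; for `ρ(g)` it makes `m`
even, hence `m ≥ 2`.
-/

open Module Polynomial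

namespace Polynomial

variable {R : Type*} [CommRing R] [IsDomain R]

lemma reverse_X_add_one_pow (n : ℕ) : ((X + 1 : R[X]) ^ n).reverse = (X + 1) ^ n := by
  have hX : (X : R[X]).reverse = 1 := by rw [← mul_one X, reverse_X_mul, ← C_1, reverse_C]
  have h1 : (X + 1 : R[X]).reverse = X + 1 := by
    simpa [hX, add_comm] using reverse_add_C (X : R[X]) 1
  induction n with
  | zero => simpa using reverse_C (1 : R)
  | succ n ih => rw [pow_succ, reverse_mul_of_domain, ih, h1]

theorem mul_neg_one_pow_rootMultiplicity_eq {p : R[X]} (hp : p ≠ 0) {a b : R}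
    (h : C a * p = C b * p.reverse) :
    a * (-1) ^ p.rootMultiplicity (-1) = b * (-1) ^ p.natDegree := by
  set m := p.rootMultiplicity (-1)
  set q := p /ₘ (X + 1) ^ m
  have hX : (X - C (-1) : R[X]) = X + 1 := by simp
  have hX0 : (X + 1 : R[X]) ^ m ≠ 0 := pow_ne_zero _ (by simpa using X_add_C_ne_zero (1 : R))
  have hpq : (X + 1) ^ m * q = p := by
    simpa [q, hX] using pow_mul_divByMonic_rootMultiplicity_eq p (-1)
  have hq : q.eval (-1) ≠ 0 := by
    simpa [q, hX] using eval_divByMonic_pow_rootMultiplicity_ne_zero (-1) hp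
  have hdeg : p.natDegree = m + q.natDegree := by
    rw [← hpq, natDegree_mul hX0 (by rintro h; simp [h] at hq), natDegree_pow]
    rw [← C_1, natDegree_X_add_C, mul_one]
  have hrev : C a * q = C b * q.reverse := by
    refine mul_left_cancel₀ hX0 ?_
    rw [mul_left_comm, hpq, h, ← hpq, reverse_mul_of_domain, reverse_X_add_one_pow]
    ring
  have hev : q.reverse.eval (-1) * (-1) ^ q.natDegree = q.eval (-1) := by
    let : Invertible (1 : R) := invertibleOne
    let : Invertible (-1 : R) := invertibleNeg 1
    simpa [eval₂_eq_eval_map, invOf_neg] using eval₂_reverse_mul_pow (RingHom.id R) (-1) q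
  have hab : a * (-1) ^ q.natDegree = b := by
    refine mul_right_cancel₀ hq ?_
    have := congrArg (eval (-1)) hrev
    simp only [eval_mul, eval_C] at this
    linear_combination (-1) ^ q.natDegree * this + b * hev
  have hsq : ((-1 : R) ^ q.natDegree) ^ 2 = 1 := by
    rw [← pow_mul, mul_comm, pow_mul, neg_one_sq, one_pow]
  rw [hdeg]
  linear_combination ((-1) ^ m * (-1) ^ q.natDegree) * hab - a * (-1) ^ m * hsq

end Polynomial

namespace LinearMap

variable {k V : Type*} [Field k] [AddCommGroup V] [Module k V] [FiniteDimensional k V]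

theorem charpoly_dualMap (f : Module.End k V) : f.dualMap.charpoly = f.charpoly := by
  let b := Module.finBasis k V
  rw [← charpoly_toMatrix f b, ← charpoly_toMatrix f.dualMap b.dualBasis, dualMap_def,
    toMatrix_transpose, Matrix.charpoly_transpose]

theorem charpoly_eq_of_dualMap_conj (e : V ≃ₗ[k] Module.Dual k V) {f g : Module.End k V}
    (h : ∀ v, e (f v) = g.dualMap (e v)) : f.charpoly = g.charpoly := by
  have hconj : e.conj f = g.dualMap := by
    ext φ : 1
    simp [LinearEquiv.conj_apply, h]
  rw [← e.charpoly_conj f, hconj, charpoly_dualMap]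

theorem charpoly_eq_of_isometry {B : LinearMap.BilinForm k V} (hB : B.SeparatingLeft)
    {f g : Module.End k V} (hf : ∀ v w, B (f v) (f w) = B v w) (hfg : f * g = 1) :
    f.charpoly = g.charpoly := by
  let e : V ≃ₗ[k] Module.Dual k V := B.linearEquivOfInjective
    (ker_eq_bot.mp (separatingLeft_iff_ker_eq_bot.mp hB)) Subspace.dual_finrank_eq.symm
  refine charpoly_eq_of_dualMap_conj e fun v ↦ ?_
  ext w
  have hw : f (g w) = w := by rw [← Module.End.mul_apply, hfg, Module.End.one_apply]
  simp [e, ← hf v (g w), hw]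

theorem C_det_mul_charpoly_eq_reverse {f g : Module.End k V} (hgf : g * f = 1) :
    C (LinearMap.det f) * g.charpoly = (-1) ^ finrank k V * f.charpoly.reverse := by
  let b := Module.finBasis k V
  have hM : toMatrix b b g * toMatrix b b f = 1 := by rw [← toMatrix_mul, hgf, toMatrix_one]
  have hinv : toMatrix b b g = (toMatrix b b f)⁻¹ := (Matrix.inv_eq_left_inv hM).symm
  have hdet : IsUnit (toMatrix b b f).det := Matrix.isUnit_det_of_left_inverse hM
  rw [← charpoly_toMatrix f b, ← charpoly_toMatrix g b, ← det_toMatrix b, hinv,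
    Matrix.charpoly_inv _ ((Matrix.isUnit_iff_isUnit_det _).mpr hdet), Matrix.reverse_charpoly,
    Fintype.card_fin]
  have hC : C (toMatrix b b f).det * C (Ring.inverse (toMatrix b b f).det) = 1 := by
    rw [← C_mul, Ring.mul_inverse_cancel _ hdet, C_1]
  linear_combination ((-1) ^ finrank k V * (toMatrix b b f).charpolyRev) * hC

theorem det_mul_neg_one_pow_rootMultiplicity {f g : Module.End k V} (hgf : g * f = 1)
    (h : f.charpoly = g.charpoly) :
    LinearMap.det f * (-1) ^ f.charpoly.rootMultiplicity (-1) = 1 := by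
  have hrev := C_det_mul_charpoly_eq_reverse hgf
  rw [← h, ← C_1, ← C_neg, ← C_pow] at hrev
  rw [mul_neg_one_pow_rootMultiplicity_eq (charpoly_monic f).ne_zero hrev, charpoly_natDegree,
    ← pow_add, ← two_mul, pow_mul, neg_one_sq, one_pow]

end LinearMap

theorem Module.End.HasEigenvalue.of_restrict {R M : Type*} [CommRing R] [AddCommGroup M]
    [Module R M] {f : Module.End R M} {p : Submodule R M} {hfp : ∀ x ∈ p, f x ∈ p} {μ : R}
    (h : Module.End.HasEigenvalue (f.restrict hfp) μ) : f.HasEigenvalue μ := by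
  obtain ⟨x, hx, hx0⟩ := h.exists_hasEigenvector
  exact hasEigenvalue_of_hasEigenvector ⟨eigenspace_restrict_le_eigenspace f hfp μ ⟨x, hx, rfl⟩,
    by simpa using hx0⟩

theorem Module.End.hasEigenvalue_iff_rootMultiplicity_charpoly_pos {k V : Type*} [Field k]
    [AddCommGroup V] [Module k V] [FiniteDimensional k V] (f : Module.End k V) (μ : k) :
    f.HasEigenvalue μ ↔ 0 < f.charpoly.rootMultiplicity μ :=
  (hasEigenvalue_iff_isRoot_charpoly f μ).trans
    (rootMultiplicity_pos (LinearMap.charpoly_monic f).ne_zero).symm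

theorem stmt_11_general {k G V : Type} [Field k] [CharZero k] [Group G]
    [AddCommGroup V] [Module k V] [FiniteDimensional k V]
    (ρ : Representation k G V)
    (hdet : ∀ g : G, LinearMap.det (ρ g) = 1)
    (B : V →ₗ[k] V →ₗ[k] k)
    (hBnd : ∀ v : V, (∀ w : V, B v w = 0) → v = 0)
    (hBinv : ∀ (g : G) (v w : V), B (ρ g v) (ρ g w) = B v w)
    -- a 2-dimensional irreducible self-dual subrepresentation ρ′ on p
    (p : Submodule k V)
    (hinv : ∀ g : G, ∀ v ∈ p, ρ g v ∈ p)
    (hsd : ∃ e : p ≃ₗ[k] Module.Dual k p,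
      ∀ (g : G) (v : p), e ((ρ g).restrict (hinv g) v) =
        LinearMap.dualMap ((ρ g⁻¹).restrict (hinv g⁻¹)) (e v)) :
    ∀ g : G, LinearMap.det ((ρ g).restrict (hinv g)) = -1 →
      Module.End.HasEigenvalue (ρ g) (-1) ∧
      (X + 1) ^ 2 ∣ LinearMap.charpoly (ρ g) := by
  intro g hg
  obtain ⟨e, he⟩ := hsd
  have hneg : (-1 : k) ≠ 1 := by norm_num
  have hA : (ρ g⁻¹).restrict (hinv g⁻¹) * (ρ g).restrict (hinv g) = 1 := by
    ext x
    simp [Module.End.mul_apply, LinearMap.restrict_apply, ρ.inv_self_apply]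
  have hmA := LinearMap.det_mul_neg_one_pow_rootMultiplicity hA
    (LinearMap.charpoly_eq_of_dualMap_conj e (he g))
  rw [hg, neg_one_mul, neg_eq_iff_eq_neg] at hmA
  have hev : Module.End.HasEigenvalue (ρ g) (-1) := by
    refine Module.End.HasEigenvalue.of_restrict (hfp := hinv g) ?_
    rw [Module.End.hasEigenvalue_iff_rootMultiplicity_charpoly_pos, Nat.pos_iff_ne_zero]
    rintro h0
    rw [h0, pow_zero] at hmA
    exact hneg hmA.symm
  refine ⟨hev, ?_⟩
  have hmV := LinearMap.det_mul_neg_one_pow_rootMultiplicity (map_mul_eq_one ρ (inv_mul_cancel g))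
    (LinearMap.charpoly_eq_of_isometry (B := B) hBnd (hBinv g)
      (map_mul_eq_one ρ (mul_inv_cancel g)))
  rw [hdet, one_mul, neg_one_pow_eq_one_iff_even hneg] at hmV
  have h2 : 2 ≤ (ρ g).charpoly.rootMultiplicity (-1) := by
    have := (Module.End.hasEigenvalue_iff_rootMultiplicity_charpoly_pos _ _).mp hev
    obtain ⟨r, hr⟩ := hmV
    omega
  simpa using (le_rootMultiplicity_iff (LinearMap.charpoly_monic (ρ g)).ne_zero).mp h2

theorem stmt_11 {k G V : Type} [Field k] [IsAlgClosed k] [CharZero k] [Group G]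
    [AddCommGroup V] [Module k V] [FiniteDimensional k V]
    (ρ : Representation k G V) (h5 : finrank k V = 5)
    (hdet : ∀ g : G, LinearMap.det (ρ g) = 1)
    (B : V →ₗ[k] V →ₗ[k] k)
    (hBsymm : ∀ v w : V, B v w = B w v)
    (hBnd : ∀ v : V, (∀ w : V, B v w = 0) → v = 0)
    (hBinv : ∀ (g : G) (v w : V), B (ρ g v) (ρ g w) = B v w)
    -- a 2-dimensional irreducible self-dual subrepresentation ρ′ on p
    (p : Submodule k V) (hp2 : finrank k p = 2)
    (hinv : ∀ g : G, ∀ v ∈ p, ρ g v ∈ p)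
    (hirr : ∀ q : Submodule k V, q ≤ p → (∀ g : G, ∀ v ∈ q, ρ g v ∈ q) →
      q = ⊥ ∨ q = p)
    (hsd : ∃ e : p ≃ₗ[k] Module.Dual k p,
      ∀ (g : G) (v : p), e ((ρ g).restrict (hinv g) v) =
        LinearMap.dualMap ((ρ g⁻¹).restrict (hinv g⁻¹)) (e v)) :
    ∀ g : G, LinearMap.det ((ρ g).restrict (hinv g)) = -1 →
      Module.End.HasEigenvalue (ρ g) (-1) ∧
      (X + 1) ^ 2 ∣ LinearMap.charpoly (ρ g) :=
  stmt_11_general ρ hdet B hBnd hBinv p hinv hsd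
end
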